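/- Let F = {(w_i, w_i*)}_{i=1}^n be a finite p-cyclically monotone operator with ⟨w_i − w_{i+1}, w_i* − w_{i+1}*⟩ = 0 for all i (indices mod n, with (w_{n+1},w_{n+1}*) = (w_1,w_1*)). Then the operator S whose graph is the union of the segments co{(w_i,w_i*),(w_{i+1},w_{i+1}*)} in X × X* is p-cyclically monotone, and its p-cyclically monotone polar coincides with that of F: S^{μ_p} = F^{μ_p}. -/

import Mathlib

open scoped BigOperators RealInnerProductSpace

/-- The cyclic sum `∑_{i=0}^{p} ⟨x_{i+1} - x_i, x_i*⟩` (indices mod `p+1`),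
in a real Hilbert space identified with its dual. -/
def cycSumH {X : Type*} [NormedAddCommGroup X] [InnerProductSpace ℝ X] (p : ℕ)
    (z : Fin (p + 1) → X × X) : ℝ :=
  ∑ i, ⟪(z (i + 1)).1 - (z i).1, (z i).2⟫

/-- `T` (identified with its graph) is `p`-cyclically monotone. -/
def CycMonoH {X : Type*} [NormedAddCommGroup X] [InnerProductSpace ℝ X] (p : ℕ)
    (T : Set (X × X)) : Prop :=
  ∀ z : Fin (p + 1) → X × X, (∀ i, z i ∈ T) → cycSumH p z ≤ 0

/-- The `p`-cyclically monotone polar of `T`. -/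
def cycPolarH {X : Type*} [NormedAddCommGroup X] [InnerProductSpace ℝ X] (p : ℕ)
    (T : Set (X × X)) : Set (X × X) :=
  {w | ∀ z : Fin (p + 1) → X × X,
    z 0 = w → (∀ i, i ≠ 0 → z i ∈ T) → cycSumH p z ≤ 0}

/-- Domain of a multivalued operator (graph). -/
def opDom {X Y : Type*} (T : Set (X × Y)) : Set X := {x | ∃ y, (x, y) ∈ T}

/-- Range of a multivalued operator (graph). -/
def opRan {X Y : Type*} (T : Set (X × Y)) : Set Y := {y | ∃ x, (x, y) ∈ T}

/-- Image of a multivalued operator (graph) at a point. -/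
def opIm {X Y : Type*} (T : Set (X × Y)) (x : X) : Set Y := {y | (x, y) ∈ T}

/-!
Along a segment `[A, B]` whose endpoints satisfy `⟪B₁ - A₁, B₂ - A₂⟫ = 0`, the quadratic part
`⟪x₁, x₂⟫` of a cyclic sum is affine, so the whole cyclic sum is an affine function of any one of
its points moving on the segment. Such a point can therefore be pushed to one of the two endpoints
without decreasing the sum. Doing this for every point turns any cycle through the segments into a
cycle through the vertices `w i` with at least as large a cyclic sum, which yields both claims.
-/

open Function

section

variable {X : Type*} [NormedAddCommGroup X] [InnerProductSpace ℝ X]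

lemma inner_sub_combo_of_inner_eq_zero {A B : X × X} (hAB : ⟪B.1 - A.1, B.2 - A.2⟫ = 0)
    {a b : ℝ} (hab : a + b = 1) (c : X) :
    ⟪c - (a • A + b • B).1, (a • A + b • B).2⟫ = a * ⟪c - A.1, A.2⟫ + b * ⟪c - B.1, B.2⟫ := by
  obtain rfl : a = 1 - b := by linarith
  simp only [Prod.fst_add, Prod.snd_add, Prod.smul_fst, Prod.smul_snd, inner_sub_left,
    inner_add_left, inner_add_right, inner_sub_right, real_inner_smul_left,
    real_inner_smul_right] at hAB ⊢
  linear_combination (b - b ^ 2) * hAB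

lemma cycSumH_update_combo (p : ℕ) (z : Fin (p + 1) → X × X) (j : Fin (p + 1)) {A B : X × X}
    (hAB : ⟪B.1 - A.1, B.2 - A.2⟫ = 0) {a b : ℝ} (hab : a + b = 1) :
    cycSumH p (update z j (a • A + b • B)) =
      a * cycSumH p (update z j A) + b * cycSumH p (update z j B) := by
  simp only [cycSumH, Finset.mul_sum, ← Finset.sum_add_distrib]
  refine Finset.sum_congr rfl fun i _ => ?_
  by_cases hi : i = j
  · subst hi
    by_cases hsucc : i + 1 = i
    · -- `p = 0`: the term is `⟪x₁ - x₁, x₂⟫ = 0` for every `x`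
      simp [hsucc]
    · simp only [update_of_ne hsucc, update_self]
      exact inner_sub_combo_of_inner_eq_zero hAB hab _
  · by_cases hsucc : i + 1 = j
    · subst hsucc
      simp only [update_self, update_of_ne hi, Prod.fst_add, Prod.smul_fst, inner_sub_left,
        inner_add_left, real_inner_smul_left]
      linear_combination (⟪(z i).1, (z i).2⟫) * hab
    · simp only [update_of_ne hi, update_of_ne hsucc]
      linear_combination (-⟪(z (i + 1)).1 - (z i).1, (z i).2⟫) * hab

lemma exists_cycSumH_le_update_endpoint (p : ℕ) (z : Fin (p + 1) → X × X) (j : Fin (p + 1))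
    {A B : X × X} (hAB : ⟪B.1 - A.1, B.2 - A.2⟫ = 0) (hz : z j ∈ segment ℝ A B) :
    ∃ v ∈ ({A, B} : Set (X × X)), cycSumH p z ≤ cycSumH p (update z j v) := by
  obtain ⟨a, b, ha, hb, hab, hzj⟩ := hz
  have hcombo : cycSumH p z ≤ max (cycSumH p (update z j A)) (cycSumH p (update z j B)) :=
    calc cycSumH p z = cycSumH p (update z j (a • A + b • B)) := by rw [hzj, update_eq_self]
      _ = a * cycSumH p (update z j A) + b * cycSumH p (update z j B) :=
        cycSumH_update_combo p z j hAB hab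
      _ ≤ _ := Convex.combo_le_max _ _ ha hb hab
  rcases le_total (cycSumH p (update z j A)) (cycSumH p (update z j B)) with h | h
  · exact ⟨B, by simp, hcombo.trans_eq (max_eq_right h)⟩
  · exact ⟨A, by simp, hcombo.trans_eq (max_eq_left h)⟩

section Reduction

variable {V S : Set (X × X)}
  (hS : ∀ x ∈ S, ∃ A ∈ V, ∃ B ∈ V, ⟪B.1 - A.1, B.2 - A.2⟫ = 0 ∧ x ∈ segment ℝ A B)
include hS

lemma exists_cycSumH_le_of_mem_segments (p : ℕ) (s : Finset (Fin (p + 1)))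
    (z : Fin (p + 1) → X × X) (hz : ∀ i ∈ s, z i ∈ S) :
    ∃ z' : Fin (p + 1) → X × X, (∀ i ∈ s, z' i ∈ V) ∧ (∀ i ∉ s, z' i = z i) ∧
      cycSumH p z ≤ cycSumH p z' := by
  induction s using Finset.induction_on generalizing z with
  | empty => exact ⟨z, by simp, fun _ _ => rfl, le_rfl⟩
  | @insert j s hj ih =>
    obtain ⟨A, hA, B, hB, hAB, hzj⟩ := hS (z j) (hz j (Finset.mem_insert_self j s))
    obtain ⟨v, hv, hle⟩ := exists_cycSumH_le_update_endpoint p z j hAB hzj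
    have hvV : v ∈ V := by rcases hv with rfl | rfl <;> assumption
    obtain ⟨z', hz'V, hz'eq, hle'⟩ := ih (update z j v) fun i hi => by
      rw [update_of_ne (ne_of_mem_of_not_mem hi hj)]
      exact hz i (Finset.mem_insert_of_mem hi)
    refine ⟨z', fun i hi => ?_, fun i hi => ?_, hle.trans hle'⟩
    · rcases Finset.mem_insert.1 hi with rfl | hi
      · rw [hz'eq i hj, update_self]
        exact hvV
      · exact hz'V i hi
    · rw [Finset.mem_insert, not_or] at hi
      rw [hz'eq i hi.2, update_of_ne hi.1]

lemma CycMonoH.of_mem_segments {p : ℕ} (hV : CycMonoH p V) : CycMonoH p S := by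
  intro z hz
  obtain ⟨z', hz'V, -, hle⟩ := exists_cycSumH_le_of_mem_segments hS p Finset.univ z fun i _ => hz i
  exact hle.trans (hV z' fun i => hz'V i (Finset.mem_univ i))

lemma cycPolarH_subset_of_mem_segments (p : ℕ) : cycPolarH p V ⊆ cycPolarH p S := by
  intro x hx z hz0 hz
  obtain ⟨z', hz'V, hz'eq, hle⟩ := exists_cycSumH_le_of_mem_segments hS p (Finset.univ.erase 0) z
    fun i hi => hz i (Finset.ne_of_mem_erase hi)
  refine hle.trans (hx z' ?_ fun i hi => hz'V i (Finset.mem_erase.2 ⟨hi, Finset.mem_univ i⟩))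
  rw [hz'eq 0 (Finset.notMem_erase 0 _), hz0]

end Reduction

lemma cycPolarH_anti (p : ℕ) : Antitone (cycPolarH (X := X) p) :=
  fun _ _ h _ hx z hz0 hz => hx z hz0 fun i hi => h (hz i hi)

end

theorem segments_cycMono_and_polar_eq {X : Type*} [NormedAddCommGroup X]
    [InnerProductSpace ℝ X] (p n : ℕ) (w : Fin (n + 1) → X × X)
    (hmono : CycMonoH p (Set.range w))
    (horth : ∀ i : Fin (n + 1), ⟪(w i).1 - (w (i + 1)).1, (w i).2 - (w (i + 1)).2⟫ = (0 : ℝ)) :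
    CycMonoH p (⋃ i : Fin (n + 1), segment ℝ (w i) (w (i + 1))) ∧
      cycPolarH p (⋃ i : Fin (n + 1), segment ℝ (w i) (w (i + 1))) =
        cycPolarH p (Set.range w) := by
  have hS : ∀ x ∈ ⋃ i : Fin (n + 1), segment ℝ (w i) (w (i + 1)), ∃ A ∈ Set.range w,
      ∃ B ∈ Set.range w, ⟪B.1 - A.1, B.2 - A.2⟫ = 0 ∧ x ∈ segment ℝ A B := by
    intro x hx
    obtain ⟨i, hi⟩ := Set.mem_iUnion.1 hx
    refine ⟨w i, ⟨i, rfl⟩, w (i + 1), ⟨i + 1, rfl⟩, ?_, hi⟩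
    rw [← neg_sub (w i).1, ← neg_sub (w i).2, inner_neg_neg, horth i]
  have hrange : Set.range w ⊆ ⋃ i : Fin (n + 1), segment ℝ (w i) (w (i + 1)) :=
    Set.range_subset_iff.2 fun i => Set.mem_iUnion.2 ⟨i, left_mem_segment ℝ _ _⟩
  exact ⟨hmono.of_mem_segments hS, (cycPolarH_anti p hrange).antisymm
    (cycPolarH_subset_of_mem_segments hS p)⟩
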